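/- arXiv:0803.0508 — 5 statements merged into one kernel-verified Lean document; each statement's English description precedes it below -/
import Mathlib

section
/- The matrix A = [[0,1,1],[1,0,1],[1,1,0]] has determinant 2, and the rhombic dodecahedron Ω = {x ∈ ℝ³ : -1 < x_j ± x_i ≤ 1 for all 1 ≤ i < j ≤ 3} tiles ℝ³ by translations by the lattice A·ℤ³; that is, for every x ∈ ℝ³ there exists a unique k ∈ ℤ³ with x - A·k ∈ Ω. -/
open Matrix

/-- Generator matrix of the fcc lattice. -/
def fccA : Matrix (Fin 3) (Fin 3) ℝ := !![0,1,1;1,0,1;1,1,0]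

/-- Half-open rhombic dodecahedron. -/
def rhombicDodec : Set (Fin 3 → ℝ) :=
  {x | ∀ i j : Fin 3, i < j →
    (-1 < x j - x i ∧ x j - x i ≤ 1 ∧ -1 < x j + x i ∧ x j + x i ≤ 1)}

/-!
In the coordinates `u i = ∑ j, y j - y i` (the sums of pairs of coordinates), `Ω` becomes the cell
`{u | u i ∈ (-1, 1], u i - u j ∈ (-1, 1] for i < j}` and `A ℤ³` becomes `{v ∈ ℤ³ | 4 ∣ ∑ v}`.
Existence: round every `u i` up, then lower the `r` coordinates of smallest fractional part
(ties broken towards the smaller index), where `r ≡ ∑ ⌈u i⌉ [mod 4]`. Uniqueness: the difference `d`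
of two solutions has entries and pairwise differences in `{-1, 0, 1}`, so its entries all have one
sign, and `4 ∣ ∑ d` with `|∑ d| ≤ 3` forces `d = 0`. Both arguments work in any dimension `n`
with `n + 1` in place of `4`.
-/

def diffCell (n : ℕ) : Set (Fin n → ℝ) :=
  {t | (∀ i, -1 < t i ∧ t i ≤ 1) ∧ ∀ i j, i < j → -1 < t i - t j ∧ t i - t j ≤ 1}

theorem exists_lowerClosed_finset_card_eq {ι β : Type*} [Fintype ι] [DecidableEq ι]
    [LinearOrder β] (key : ι → β) {r : ℕ} (hr : r ≤ Fintype.card ι) :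
    ∃ S : Finset ι, S.card = r ∧ ∀ i ∈ S, ∀ j, key j < key i → j ∈ S := by
  induction r with
  | zero => exact ⟨∅, rfl, by simp⟩
  | succ r ih =>
    obtain ⟨S, hcard, hS⟩ := ih (by omega)
    have hne : Sᶜ.Nonempty := by
      rw [← Finset.card_pos, Finset.card_compl]
      omega
    obtain ⟨m, hmS, hmin⟩ := Sᶜ.exists_min_image key hne
    rw [Finset.mem_compl] at hmS
    refine ⟨insert m S, by rw [Finset.card_insert_of_notMem hmS, hcard], ?_⟩
    rintro i hi j hji
    rw [Finset.mem_insert] at hi ⊢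
    rcases hi with rfl | hi
    · by_contra! hj
      exact (hmin j (Finset.mem_compl.2 hj.2)).not_gt hji
    · exact Or.inr (hS i hi j hji)

theorem exists_dvd_sum_sub_mem_diffCell {n : ℕ} (t : Fin n → ℝ) :
    ∃ v : Fin n → ℤ, (n + 1 : ℤ) ∣ ∑ i, v i ∧ (fun i => t i - v i) ∈ diffCell n := by
  set r := ((∑ i, ⌈t i⌉) % (n + 1 : ℤ)).toNat
  have hr : r ≤ Fintype.card (Fin n) := by
    have := Int.emod_lt_of_pos (∑ i, ⌈t i⌉) (by omega : (0 : ℤ) < n + 1)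
    simp only [Fintype.card_fin]; omega
  obtain ⟨S, hcard, hS⟩ :=
    exists_lowerClosed_finset_card_eq (fun i => toLex (t i - ⌈t i⌉, i)) hr
  refine ⟨fun i => ⌈t i⌉ - if i ∈ S then 1 else 0, ?_, ?_⟩
  · have hr' : (r : ℤ) = (∑ i, ⌈t i⌉) % (n + 1 : ℤ) :=
      Int.toNat_of_nonneg (Int.emod_nonneg _ (by omega))
    rw [Finset.sum_sub_distrib, Finset.sum_boole, Finset.filter_mem_eq_inter, Finset.univ_inter,
      hcard, hr', Int.emod_def, sub_sub_cancel]
    exact dvd_mul_right _ _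
  · have hfrac (i : Fin n) : -1 < t i - ⌈t i⌉ ∧ t i - ⌈t i⌉ ≤ 0 :=
      ⟨by linarith [Int.ceil_lt_add_one (t i)], by linarith [Int.le_ceil (t i)]⟩
    have hkey {i j : Fin n} (hi : i ∈ S) (hj : j ∉ S) :
        t i - ⌈t i⌉ < t j - ⌈t j⌉ ∨ t i - ⌈t i⌉ = t j - ⌈t j⌉ ∧ i ≤ j := by
      simpa only [Prod.Lex.toLex_le_toLex] using not_lt.1 (mt (hS i hi j) hj)
    refine ⟨fun i => ?_, fun i j hij => ?_⟩
    · obtain ⟨h1, h2⟩ := hfrac i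
      push_cast
      split_ifs <;> constructor <;> linarith
    · obtain ⟨hi1, hi2⟩ := hfrac i
      obtain ⟨hj1, hj2⟩ := hfrac j
      push_cast
      by_cases hi : i ∈ S <;> by_cases hj : j ∈ S <;> simp only [hi, hj, if_true, if_false]
      · constructor <;> linarith
      · rcases hkey hi hj with h | ⟨h, -⟩ <;> constructor <;> linarith
      · rcases hkey hj hi with h | ⟨-, h⟩
        · constructor <;> linarith
        · exact absurd hij (not_lt.2 h)
      · constructor <;> linarith

theorem abs_sub_lt_two_of_mem_diffCell {n : ℕ} {s t : Fin n → ℝ} (hs : s ∈ diffCell n)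
    (ht : t ∈ diffCell n) :
    (∀ i, |s i - t i| < 2) ∧ ∀ i j, |(s i - s j) - (t i - t j)| < 2 := by
  refine ⟨fun i => ?_, fun i j => ?_⟩
  · have := hs.1 i; have := ht.1 i
    rw [abs_sub_lt_iff]; constructor <;> linarith
  rcases lt_trichotomy i j with hij | rfl | hij
  · have := hs.2 i j hij; have := ht.2 i j hij
    rw [abs_sub_lt_iff]; constructor <;> linarith
  · simp
  · have := hs.2 j i hij; have := ht.2 j i hij
    rw [abs_sub_lt_iff]; constructor <;> linarith

theorem eq_zero_of_dvd_sum_of_nonneg {n : ℕ} (d : Fin n → ℤ) (h0 : ∀ i, 0 ≤ d i)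
    (h1 : ∀ i, d i ≤ 1) (hsum : (n + 1 : ℤ) ∣ ∑ i, d i) : d = 0 := by
  have hle : ∑ i, d i ≤ n := by
    simpa using Finset.sum_le_card_nsmul Finset.univ d 1 (fun i _ => h1 i)
  have hzero := Int.eq_zero_of_dvd_of_nonneg_of_lt (Finset.sum_nonneg fun i _ => h0 i)
    (by omega) hsum
  funext i
  exact (Finset.sum_eq_zero_iff_of_nonneg fun i _ => h0 i).1 hzero i (Finset.mem_univ i)

theorem eq_zero_of_dvd_sum {n : ℕ} (d : Fin n → ℤ) (hd : ∀ i, |d i| ≤ 1)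
    (hdiff : ∀ i j, |d i - d j| ≤ 1) (hsum : (n + 1 : ℤ) ∣ ∑ i, d i) : d = 0 := by
  have hsign : (∀ i, 0 ≤ d i) ∨ ∀ i, d i ≤ 0 := by
    by_contra! h
    obtain ⟨⟨i, hi⟩, ⟨j, hj⟩⟩ := h
    have := hd i; have := hd j; have := hdiff j i
    rw [abs_le] at *
    omega
  rcases hsign with h | h
  · exact eq_zero_of_dvd_sum_of_nonneg d h (fun i => (abs_le.1 (hd i)).2) hsum
  · refine neg_eq_zero.1 (eq_zero_of_dvd_sum_of_nonneg (-d) (fun i => neg_nonneg.2 (h i))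
      (fun i => by simpa [neg_le] using (abs_le.1 (hd i)).1) ?_)
    simpa using hsum.neg_right

theorem abs_le_one_of_abs_intCast_lt_two {a : ℤ} (h : |(a : ℝ)| < 2) : |a| ≤ 1 := by
  have : |a| < 2 := by exact_mod_cast h
  omega

theorem existsUnique_dvd_sum_sub_mem_diffCell {n : ℕ} (t : Fin n → ℝ) :
    ∃! v : Fin n → ℤ, (n + 1 : ℤ) ∣ ∑ i, v i ∧ (fun i => t i - v i) ∈ diffCell n := by
  obtain ⟨v, hv, hvt⟩ := exists_dvd_sum_sub_mem_diffCell t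
  refine ⟨v, ⟨hv, hvt⟩, fun w ⟨hw, hwt⟩ => sub_eq_zero.1 (eq_zero_of_dvd_sum (w - v) ?_ ?_ ?_)⟩
  · obtain ⟨hclose, -⟩ := abs_sub_lt_two_of_mem_diffCell hvt hwt
    exact fun i => abs_le_one_of_abs_intCast_lt_two (by simpa using hclose i)
  · obtain ⟨-, hclose⟩ := abs_sub_lt_two_of_mem_diffCell hvt hwt
    refine fun i j => abs_le_one_of_abs_intCast_lt_two ?_
    convert hclose i j using 2
    simp only [Pi.sub_apply]; push_cast; ring
  · simpa [Finset.sum_sub_distrib] using dvd_sub hw hv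

def complSum {n : ℕ} (y : Fin n → ℝ) : Fin n → ℝ := fun i => ∑ j, y j - y i

theorem mem_rhombicDodec_iff (y : Fin 3 → ℝ) : y ∈ rhombicDodec ↔ complSum y ∈ diffCell 3 := by
  simp only [rhombicDodec, diffCell, complSum, Set.mem_ofPred_eq, Fin.forall_fin_succ,
    Fin.sum_univ_three, Fin.succ_zero_eq_one, Fin.succ_one_eq_two, Fin.reduceLT,
    IsEmpty.forall_iff, forall_true_left, and_true, true_and]
  constructor <;> intro h <;> casesm* _ ∧ _ <;> and_intros <;> linarith

theorem fccA_mulVec_apply (k : Fin 3 → ℝ) (i : Fin 3) : (fccA *ᵥ k) i = ∑ j, k j - k i := by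
  fin_cases i <;> simp [fccA, mulVec, dotProduct, Fin.sum_univ_three] <;> ring

theorem fccA_det : fccA.det = 2 := by
  rw [det_fin_three]; simp [fccA]; norm_num

theorem complSum_sub_fccA_mulVec (x k : Fin 3 → ℝ) :
    complSum (x - fccA *ᵥ k) = fun i => complSum x i - (∑ j, k j + k i) := by
  funext i
  simp only [complSum, Pi.sub_apply, fccA_mulVec_apply, Fin.sum_univ_three]
  ring

theorem stmt0 :
    fccA.det = 2 ∧
    ∀ x : Fin 3 → ℝ, ∃! k : Fin 3 → ℤ,
      (x - fccA.mulVec (fun i => (k i : ℝ))) ∈ rhombicDodec := by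
  refine ⟨fccA_det, fun x => ?_⟩
  have hmem (k : Fin 3 → ℤ) : x - fccA *ᵥ (fun i => (k i : ℝ)) ∈ rhombicDodec ↔
      (fun i => complSum x i - ((∑ j, k j + k i : ℤ) : ℝ)) ∈ diffCell 3 := by
    rw [mem_rhombicDodec_iff, complSum_sub_fccA_mulVec]
    push_cast; rfl
  have hdvd (k : Fin 3 → ℤ) : ((3 : ℕ) + 1 : ℤ) ∣ ∑ i, (∑ j, k j + k i) :=
    ⟨∑ j, k j, by simp only [Finset.sum_add_distrib, Finset.sum_const, Finset.card_univ,
      Fintype.card_fin]; push_cast; ring⟩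
  obtain ⟨v, ⟨⟨s, hs⟩, hv⟩, hv_unique⟩ := existsUnique_dvd_sum_sub_mem_diffCell (complSum x)
  simp only [Fin.sum_univ_three, Nat.cast_ofNat] at hs
  refine ⟨fun i => v i - s, (hmem _).2 ?_, fun k hk => ?_⟩
  · convert hv using 4 with i
    simp only [Fin.sum_univ_three]
    linarith
  · have hk' := congrFun (hv_unique _ ⟨hdvd k, (hmem k).1 hk⟩)
    simp only [Fin.sum_univ_three] at hk'
    have := hk' 0; have := hk' 1; have := hk' 2
    funext i
    fin_cases i <;> dsimp <;> omega
end

section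
/- Let ℝ⁴_H = {t ∈ ℝ⁴ : t₁+t₂+t₃+t₄ = 0} and Ω_H = {t ∈ ℝ⁴_H : -1 < t_i - t_j ≤ 1 for all 1 ≤ i < j ≤ 4}. If t, s ∈ Ω_H and s - t ∈ ℤ⁴ (hence s - t ∈ ℤ⁴ ∩ ℝ⁴_H), then t = s. -/
/-- The half-open rhombic dodecahedron in homogeneous coordinates. -/
def OmegaH : Set (Fin 4 → ℝ) :=
  {t | (∑ i, t i) = 0 ∧ ∀ i j : Fin 4, i < j → (-1 < t i - t j ∧ t i - t j ≤ 1)}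

/-! The integer vector `m = s - t` has coordinate sum zero, and the half-open bounds force
`|mᵢ - mⱼ| < 2`, i.e. `|mᵢ - mⱼ| ≤ 1`. A nonzero integer vector with sum zero has a positive
and a negative coordinate, which differ by at least `2`; hence `m = 0`. -/

open Set

theorem Int.eq_zero_of_sum_eq_zero_of_sub_le_one {ι : Type*} [Fintype ι] {m : ι → ℤ}
    (hsum : ∑ i, m i = 0) (hle : ∀ i j, m i - m j ≤ 1) : m = 0 := by
  by_contra hm
  have hpos : ∃ i, 0 < m i := by
    by_contra! h
    exact hm (funext ((Finset.sum_eq_zero_iff_of_nonpos fun i _ => h i).1 hsum · (by simp)))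
  have hneg : ∃ j, m j < 0 := by
    by_contra! h
    exact hm (funext ((Finset.sum_eq_zero_iff_of_nonneg fun i _ => h i).1 hsum · (by simp)))
  obtain ⟨i, hi⟩ := hpos
  obtain ⟨j, hj⟩ := hneg
  linarith [hle i j]

theorem Int.abs_le_one_of_cast_eq_sub {k : ℤ} {x y : ℝ} (hx : x ∈ Ioc (-1) 1)
    (hy : y ∈ Ioc (-1) 1) (hk : (k : ℝ) = y - x) : |k| ≤ 1 := by
  have hlt : |(k : ℝ)| < 2 := by
    rw [hk, abs_lt]
    constructor <;> linarith [hx.1, hx.2, hy.1, hy.2]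
  have : |k| < 2 := by exact_mod_cast hlt
  omega

theorem eq_of_sub_int_of_sub_mem_Ioc {ι : Type*} [Fintype ι] [LinearOrder ι] {t s : ι → ℝ}
    (hsum : ∑ i, t i = ∑ i, s i) (ht : ∀ i j, i < j → t i - t j ∈ Ioc (-1) 1)
    (hs : ∀ i j, i < j → s i - s j ∈ Ioc (-1) 1) {m : ι → ℤ} (hm : ∀ i, s i - t i = m i) :
    t = s := by
  have hmsum : ∑ i, m i = 0 := by
    have : ((∑ i, m i : ℤ) : ℝ) = 0 := by
      push_cast
      simp only [← hm, Finset.sum_sub_distrib, hsum, sub_self]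
    exact_mod_cast this
  have habs : ∀ i j, i < j → |m i - m j| ≤ 1 := fun i j hij =>
    Int.abs_le_one_of_cast_eq_sub (ht i j hij) (hs i j hij) (by push_cast [← hm]; ring)
  have hle : ∀ i j, m i - m j ≤ 1 := by
    intro i j
    rcases lt_trichotomy i j with hij | rfl | hij
    · exact (le_abs_self _).trans (habs i j hij)
    · simp
    · exact (le_abs_self _).trans (abs_sub_comm (m i) (m j) ▸ habs j i hij)
  have hm0 := Int.eq_zero_of_sum_eq_zero_of_sub_le_one hmsum hle
  funext i
  simpa [hm0, sub_eq_zero, eq_comm] using hm i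

theorem stmt2 (t s : Fin 4 → ℝ) (ht : t ∈ OmegaH) (hs : s ∈ OmegaH)
    (hint : ∀ i, ∃ m : ℤ, s i - t i = (m : ℝ)) : t = s := by
  choose m hm using hint
  exact eq_of_sub_int_of_sub_mem_Ioc (ht.1.trans hs.1.symm) ht.2 hs.2 hm
end

section
/- Let ℍ = {k ∈ ℤ⁴ : k₁+k₂+k₃+k₄=0 and k₁ ≡ k₂ ≡ k₃ ≡ k₄ (mod 4)} and φ_j(t) = exp((πi/2) j·t) for j ∈ ℍ. Then for any j, k ∈ ℍ, (1/2) ∫_{Ω_H} φ_k(t) conj(φ_j(t)) dt = δ_{k,j}, where the integral is over the rhombic dodecahedron Ω_H ⊂ ℝ⁴_H with respect to three-dimensional Lebesgue measure (in coordinates t₁,t₂,t₃), and |Ω_H| = 2. -/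
open Real MeasureTheory ENNReal

/-- Index set ℍ: integer vectors with zero sum, all coordinates congruent mod 4. -/
def Hidx : Set (Fin 4 → ℤ) :=
  {k | (∑ i, k i) = 0 ∧ ∀ i j : Fin 4, k i % 4 = k j % 4}

/-- The exponential φ_j(t) = exp((πi/2) j·t). -/
noncomputable def phi (j : Fin 4 → ℤ) (t : Fin 4 → ℝ) : ℂ :=
  Complex.exp ((π : ℂ) * Complex.I / 2 * ∑ i, (j i : ℂ) * (t i : ℂ))

/-- Embedding of (t₁,t₂,t₃) into the hyperplane t₁+t₂+t₃+t₄=0. -/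
def emb (u : Fin 3 → ℝ) : Fin 4 → ℝ := ![u 0, u 1, u 2, -(u 0 + u 1 + u 2)]

/-- The rhombic dodecahedron Ω_H in the coordinates (t₁,t₂,t₃). -/
def OmegaH3 : Set (Fin 3 → ℝ) :=
  {u | ∀ i j : Fin 4, i < j → (-1 < emb u i - emb u j ∧ emb u i - emb u j ≤ 1)}

/-!
Write `t = emb u`. Since `k - j` has zero sum and coordinates congruent mod 4, the integrand
`φ_k conj φ_j` is `exp (2πi n·u)` for some `n ∈ ℤ³`, with `n = 0` iff `k = j`. This exponential is
`ℤ³`-periodic in `u`, and `Ω_H` is a fundamental domain of `ℤ³ ⊂ ℝ³` (a lattice translation acts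
on `t` by a zero-sum integer vector), so the integral over `Ω_H` equals the one over the unit
cube, which is `δ_{n,0}`.

Translates of `Ω_H` are disjoint because an integer vector of sum zero whose coordinates differ
pairwise by less than 2 vanishes. They cover almost every `t`, namely those whose coordinates
differ pairwise by non-integers: starting from `⌊t⌋`, raise the integer vector `m` by one at a
coordinate where `t - m` is largest; the maximum being strict, the coordinates of `t - m` keep
differing by less than 1, and after finitely many steps `m` has sum zero.
-/

open Submodule

section IntegerVectors

variable {ι : Type*} [Fintype ι]

theorem eq_zero_of_sum_eq_zero_of_sub_lt_two {m : ι → ℤ} (hsum : ∑ i, m i = 0)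
    (hm : ∀ i j, m i - m j < 2) : m = 0 := by
  by_contra hne
  obtain ⟨i, hi⟩ : ∃ i, 0 < m i := by
    by_contra! h
    exact hne ((Fintype.sum_eq_zero_iff_of_nonpos h).1 hsum)
  obtain ⟨j, hj⟩ : ∃ j, m j < 0 := by
    by_contra! h
    exact hne ((Fintype.sum_eq_zero_iff_of_nonneg h).1 hsum)
  linarith [hm i j]

variable [Nonempty ι]

theorem exists_sum_eq_add_of_sub_lt_one {x : ι → ℝ} (hx : ∀ i j, i ≠ j → ∀ n : ℤ, x i - x j ≠ n)
    {m₀ : ι → ℤ} (h₀ : ∀ i j, (x i - m₀ i) - (x j - m₀ j) < 1) (k : ℕ) :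
    ∃ m : ι → ℤ, ∑ i, m i = ∑ i, m₀ i + k ∧ ∀ i j, (x i - m i) - (x j - m j) < 1 := by
  classical
  induction k with
  | zero => exact ⟨m₀, by simp, h₀⟩
  | succ k ih =>
    obtain ⟨m, hsum, hm⟩ := ih
    obtain ⟨a, -, ha⟩ := Finset.exists_max_image Finset.univ (fun i => x i - m i)
      Finset.univ_nonempty
    have hlt : ∀ j, j ≠ a → x j - m j < x a - m a := fun j hj =>
      lt_of_le_of_ne (ha j (Finset.mem_univ j)) fun h =>
        hx j a hj (m j - m a) (by push_cast; linarith)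
    refine ⟨m + Pi.single a 1, by simp [Finset.sum_add_distrib, hsum, add_assoc], fun i j => ?_⟩
    by_cases hi : i = a <;> by_cases hj : j = a
    · subst hi hj; simp
    · subst hi; simp [hj]; linarith [hm i j, ha j (Finset.mem_univ j)]
    · subst hj; simp [hi]; linarith [hlt i hi]
    · simpa [hi, hj] using hm i j

theorem exists_sum_eq_of_sub_lt_one {t : ι → ℝ} (ht : ∀ i j, i ≠ j → ∀ n : ℤ, t i - t j ≠ n)
    {s : ℤ} (hs : ∑ i, t i = s) :
    ∃ m : ι → ℤ, ∑ i, m i = s ∧ ∀ i j, (t i - m i) - (t j - m j) < 1 := by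
  have hfloor : ∑ i, ⌊t i⌋ ≤ s := by
    have : ((∑ i, ⌊t i⌋ : ℤ) : ℝ) ≤ s := by
      push_cast
      exact hs ▸ Finset.sum_le_sum fun i _ => Int.floor_le (t i)
    exact_mod_cast this
  have hfract : ∀ i j, (t i - ⌊t i⌋) - (t j - ⌊t j⌋) < 1 := fun i j => by
    rw [Int.self_sub_floor, Int.self_sub_floor]
    linarith [Int.fract_lt_one (t i), Int.fract_nonneg (t j)]
  obtain ⟨m, hm, hlt⟩ := exists_sum_eq_add_of_sub_lt_one ht hfract (s - ∑ i, ⌊t i⌋).toNat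
  exact ⟨m, by omega, hlt⟩

end IntegerVectors

section LevelSets

variable {E : Type*} [NormedAddCommGroup E] [NormedSpace ℝ E] [MeasurableSpace E] [BorelSpace E]
  [FiniteDimensional ℝ E] (μ : Measure E) [μ.IsAddHaarMeasure] {L : E →ₗ[ℝ] ℝ}

theorem LinearMap.addHaar_setOf_apply_eq (hL : L ≠ 0) (r : ℝ) : μ {x | L x = r} = 0 := by
  rcases Set.eq_empty_or_nonempty {x | L x = r} with h | ⟨x₀, hx₀⟩
  · simp [h]
  · have : {x | L x = r} = (fun x => -x₀ + x) ⁻¹' (LinearMap.ker L) := by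
      ext x
      simp only [Set.mem_ofPred_eq, Set.mem_preimage, SetLike.mem_coe, LinearMap.mem_ker, map_add,
        map_neg, show L x₀ = r from hx₀]
      rw [neg_add_eq_zero, eq_comm]
    rw [this, measure_preimage_add]
    exact Measure.addHaar_submodule μ _ fun h => hL (LinearMap.ker_eq_top.1 h)

theorem LinearMap.ae_apply_ne_intCast (hL : L ≠ 0) : ∀ᵐ x ∂μ, ∀ n : ℤ, L x ≠ n :=
  ae_all_iff.2 fun n => ae_iff.2 (by simpa using L.addHaar_setOf_apply_eq μ hL n)

end LevelSets

instance {E ι : Type*} [NormedAddCommGroup E] [NormedSpace ℝ E] [Finite ι]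
    (b : Module.Basis ι ℝ E) : Countable (span ℤ (Set.range b)).toAddSubgroup :=
  inferInstanceAs (Countable (span ℤ (Set.range b)))

section Fourier

variable {ι : Type*} [Fintype ι]

theorem mem_span_range_pi_basisFun_iff {x : ι → ℝ} :
    x ∈ span ℤ (Set.range (Pi.basisFun ℝ ι)) ↔ ∃ m : ι → ℤ, x = fun i => (m i : ℝ) := by
  rw [Module.Basis.mem_span_iff_repr_mem]
  simp [funext_iff, Classical.skolem, eq_comm]

noncomputable def fourierExp (n : ι → ℤ) (u : ι → ℝ) : ℂ :=
  Complex.exp (2 * π * Complex.I * ∑ i, (n i : ℂ) * (u i : ℂ))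

theorem fourierExp_vadd (n : ι → ℤ) (g : (span ℤ (Set.range (Pi.basisFun ℝ ι))).toAddSubgroup)
    (u : ι → ℝ) : fourierExp n (g +ᵥ u) = fourierExp n u := by
  obtain ⟨m, hm⟩ := mem_span_range_pi_basisFun_iff.1 g.2
  have : 2 * π * Complex.I * ∑ i, (n i : ℂ) * ((g +ᵥ u) i : ℂ)
      = 2 * π * Complex.I * ∑ i, (n i : ℂ) * (u i : ℂ)
        + (∑ i, n i * m i : ℤ) * (2 * π * Complex.I) := by
    simp only [AddSubgroup.vadd_def, vadd_eq_add, Pi.add_apply, hm]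
    push_cast
    simp only [mul_add, Finset.sum_add_distrib]
    ring
  rw [fourierExp, this, Complex.exp_add, Complex.exp_int_mul_two_pi_mul_I, mul_one, fourierExp]

theorem integral_Ico_exp_two_pi_I_mul_intCast (m : ℤ) :
    ∫ x in Set.Ico (0 : ℝ) 1, Complex.exp (2 * π * Complex.I * (m * x)) =
      if m = 0 then 1 else 0 := by
  rw [setIntegral_congr_set Ico_ae_eq_Ioc, ← intervalIntegral.integral_of_le zero_le_one]
  split_ifs with hm
  · simp [hm]
  · have hc : 2 * π * Complex.I * m ≠ 0 := by simp [hm, Real.pi_ne_zero]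
    have h1 : Complex.exp (2 * π * Complex.I * m) = 1 := by
      simpa [mul_comm] using Complex.exp_int_mul_two_pi_mul_I m
    simp_rw [← mul_assoc]
    simp [integral_exp_mul_complex hc, h1]

theorem setIntegral_fourierExp_pi_Ico (n : ι → ℤ) :
    ∫ u in Set.univ.pi fun _ : ι => Set.Ico (0 : ℝ) 1, fourierExp n u =
      if n = 0 then 1 else 0 := by
  have hprod : ∀ u : ι → ℝ,
      fourierExp n u = ∏ i, Complex.exp (2 * π * Complex.I * (n i * u i)) := fun u => by
    rw [fourierExp, Finset.mul_sum, Complex.exp_sum]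
  simp_rw [hprod]
  rw [volume_pi, Measure.restrict_pi_pi,
    integral_fintype_prod_eq_prod fun i (x : ℝ) => Complex.exp (2 * π * Complex.I * (n i * x))]
  simp_rw [integral_Ico_exp_two_pi_I_mul_intCast, Fintype.prod_boole, funext_iff, Pi.zero_apply]

end Fourier

def embₗ : (Fin 3 → ℝ) →ₗ[ℝ] (Fin 4 → ℝ) where
  toFun := emb
  map_add' u v := by funext i; fin_cases i <;> simp [emb]; ring
  map_smul' c u := by funext i; fin_cases i <;> simp [emb]; ring

theorem emb_add (u v : Fin 3 → ℝ) : emb (u + v) = emb u + emb v := embₗ.map_add u v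

theorem sum_emb (u : Fin 3 → ℝ) : ∑ i, emb u i = 0 := by
  simp [Fin.sum_univ_four, emb]

theorem emb_castSucc_of_sum_eq_zero {t : Fin 4 → ℝ} (ht : ∑ i, t i = 0) :
    emb (fun l => t l.castSucc) = t := by
  rw [Fin.sum_univ_four] at ht
  funext i; fin_cases i <;> simp [emb]; linarith

theorem ae_emb_sub_ne_intCast :
    ∀ᵐ u : Fin 3 → ℝ, ∀ i j, i ≠ j → ∀ n : ℤ, emb u i - emb u j ≠ n := by
  simp only [ae_all_iff]
  intro i j hij
  refine ae_all_iff.1 ?_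
  let L : (Fin 3 → ℝ) →ₗ[ℝ] ℝ :=
    ((LinearMap.proj i : (Fin 4 → ℝ) →ₗ[ℝ] ℝ) - LinearMap.proj j) ∘ₗ embₗ
  have hLu : ∀ u, L u = emb u i - emb u j := fun u => rfl
  -- `![1, 2, 4]` embeds to `![1, 2, 4, -7]`, whose coordinates are pairwise distinct.
  have hL : L ≠ 0 := fun h => by
    have := hLu ![1, 2, 4]
    rw [h] at this
    fin_cases i <;> fin_cases j <;> simp [emb] at this hij <;> norm_num at this
  filter_upwards [L.ae_apply_ne_intCast volume hL] with u hu
  simpa only [hLu] using hu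

theorem measurableSet_OmegaH3 : MeasurableSet OmegaH3 := by
  have hm : ∀ i, Measurable fun u => emb u i := fun i =>
    (measurable_pi_apply i).comp embₗ.continuous_of_finiteDimensional.measurable
  simp only [OmegaH3, Set.ofPred_forall, Set.ofPred_and]
  exact MeasurableSet.iInter fun i => MeasurableSet.iInter fun j => MeasurableSet.iInter fun _ =>
    (measurableSet_lt measurable_const ((hm i).sub (hm j))).inter
      (measurableSet_le ((hm i).sub (hm j)) measurable_const)

theorem mem_OmegaH3_of_sub_lt_one {u : Fin 3 → ℝ} (h : ∀ i j, emb u i - emb u j < 1) :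
    u ∈ OmegaH3 :=
  fun i j _ => ⟨by linarith [h j i], (h i j).le⟩

theorem sub_sub_sub_lt_two_of_mem_OmegaH3 {u v : Fin 3 → ℝ} (hu : u ∈ OmegaH3)
    (hv : v ∈ OmegaH3) (i j : Fin 4) : emb v i - emb u i - (emb v j - emb u j) < 2 := by
  rcases lt_trichotomy i j with h | rfl | h
  · linarith [(hv i j h).2, (hu i j h).1]
  · simp
  · linarith [(hv j i h).1, (hu j i h).2]

local notation "Λ" => Submodule.toAddSubgroup (span ℤ (Set.range (Pi.basisFun ℝ (Fin 3))))

theorem exists_vadd_mem_OmegaH3 {u : Fin 3 → ℝ}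
    (hu : ∀ i j, i ≠ j → ∀ n : ℤ, emb u i - emb u j ≠ n) : ∃ g : Λ, g +ᵥ u ∈ OmegaH3 := by
  obtain ⟨m, hm, hlt⟩ := exists_sum_eq_of_sub_lt_one hu (s := 0) (by simpa using sum_emb u)
  have hg : (fun l => -(m l.castSucc : ℝ)) ∈ Λ :=
    mem_span_range_pi_basisFun_iff.2 ⟨fun l => -m l.castSucc, by simp⟩
  refine ⟨⟨_, hg⟩, mem_OmegaH3_of_sub_lt_one fun i j => ?_⟩
  have hemb : emb (fun l => -(m l.castSucc : ℝ)) = fun i => -(m i : ℝ) :=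
    emb_castSucc_of_sum_eq_zero (t := fun i => -(m i : ℝ)) (by simp [← Int.cast_sum, hm])
  simp only [AddSubgroup.vadd_def, vadd_eq_add, emb_add, hemb, Pi.add_apply]
  linarith [hlt i j]

theorem eq_zero_of_mem_OmegaH3_of_add_mem {g u : Fin 3 → ℝ} (hg : g ∈ Λ) (hu : u ∈ OmegaH3)
    (hgu : g + u ∈ OmegaH3) : g = 0 := by
  obtain ⟨c, rfl⟩ := mem_span_range_pi_basisFun_iff.1 hg
  let d : Fin 4 → ℤ := ![c 0, c 1, c 2, -(c 0 + c 1 + c 2)]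
  have hd : emb (fun l => (c l : ℝ)) = fun i => (d i : ℝ) := by
    funext i; fin_cases i <;> simp [emb, d]
  have hd0 : d = 0 := by
    refine eq_zero_of_sum_eq_zero_of_sub_lt_two (by simp [d, Fin.sum_univ_four]) fun i j => ?_
    have := sub_sub_sub_lt_two_of_mem_OmegaH3 hu hgu i j
    simp only [emb_add, hd, Pi.add_apply, add_sub_cancel_right] at this
    exact_mod_cast this
  funext l
  have := congrFun hd0 l.castSucc
  fin_cases l <;> simpa [d] using this

theorem isAddFundamentalDomain_OmegaH3 : IsAddFundamentalDomain Λ OmegaH3 volume := by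
  refine .mk'' measurableSet_OmegaH3.nullMeasurableSet ?_ ?_ fun g =>
    (measurePreserving_add_left volume (g : Fin 3 → ℝ)).quasiMeasurePreserving
  · filter_upwards [ae_emb_sub_ne_intCast] with u hu using exists_vadd_mem_OmegaH3 hu
  · intro g hg
    refine Disjoint.aedisjoint (Set.disjoint_left.2 fun x hx hxΩ => hg ?_)
    obtain ⟨w, hw, rfl⟩ := hx
    exact Subtype.ext (eq_zero_of_mem_OmegaH3_of_add_mem g.2 hw hxΩ)

theorem phi_mul_conj_phi (k j : Fin 4 → ℤ) (t : Fin 4 → ℝ) :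
    phi k t * (starRingEnd ℂ) (phi j t) = phi (k - j) t := by
  simp only [phi, ← Complex.exp_conj, ← Complex.exp_add, map_mul, map_div₀, map_sum,
    Complex.conj_I, Complex.conj_ofReal, map_intCast, map_ofNat, Pi.sub_apply, Int.cast_sub,
    sub_mul, Finset.sum_sub_distrib]
  ring_nf

theorem phi_emb_eq_fourierExp {d : Fin 4 → ℤ} {n : Fin 3 → ℤ}
    (hn : ∀ l : Fin 3, d l.castSucc - d 3 = 4 * n l) (u : Fin 3 → ℝ) :
    phi d (emb u) = fourierExp n u := by
  have h0 : (d 0 : ℂ) - d 3 = 4 * n 0 := by exact_mod_cast hn 0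
  have h1 : (d 1 : ℂ) - d 3 = 4 * n 1 := by exact_mod_cast hn 1
  have h2 : (d 2 : ℂ) - d 3 = 4 * n 2 := by exact_mod_cast hn 2
  rw [phi, fourierExp]
  congr 1
  simp only [Fin.sum_univ_four, Fin.sum_univ_three, emb, Matrix.cons_val_zero,
    Matrix.cons_val_one, Matrix.cons_val_two, Matrix.cons_val_three, Matrix.head_cons,
    Matrix.tail_cons]
  push_cast
  linear_combination (π * Complex.I / 2) * (u 0 * h0 + u 1 * h1 + u 2 * h2)

theorem sub_mem_Hidx {k j : Fin 4 → ℤ} (hk : k ∈ Hidx) (hj : j ∈ Hidx) : k - j ∈ Hidx := by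
  refine ⟨by simp [Finset.sum_sub_distrib, hk.1, hj.1], fun a b => ?_⟩
  have := hk.2 a b
  have := hj.2 a b
  simp only [Pi.sub_apply]
  omega

theorem exists_four_mul_of_mem_Hidx {d : Fin 4 → ℤ} (hd : d ∈ Hidx) :
    ∃ n : Fin 3 → ℤ, ∀ l, d l.castSucc - d 3 = 4 * n l :=
  ⟨fun l => (d l.castSucc - d 3) / 4, fun l => by have := hd.2 l.castSucc 3; dsimp only; omega⟩

theorem eq_zero_iff_of_mem_Hidx {d : Fin 4 → ℤ} (hd : d ∈ Hidx) {n : Fin 3 → ℤ}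
    (hn : ∀ l, d l.castSucc - d 3 = 4 * n l) : n = 0 ↔ d = 0 := by
  constructor
  · rintro rfl
    have hsum := hd.1
    have h0 : d 0 - d 3 = 0 := hn 0
    have h1 : d 1 - d 3 = 0 := hn 1
    have h2 : d 2 - d 3 = 0 := hn 2
    simp only [Fin.sum_univ_four] at hsum
    funext i; fin_cases i <;> simp <;> omega
  · rintro rfl
    funext l
    have := hn l
    simp only [Pi.zero_apply, sub_zero] at this ⊢
    omega

/-- Orthonormality of the exponentials φ_j, j ∈ ℍ, on Ω_H; the surface measure on the
hyperplane is 2·(Lebesgue measure in the coordinates (t₁,t₂,t₃)), and |Ω_H| = 2. -/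
theorem stmt6 (k j : Fin 4 → ℤ) (hk : k ∈ Hidx) (hj : j ∈ Hidx) :
    (1 / 2 : ℂ) * ∫ u in OmegaH3,
        phi k (emb u) * (starRingEnd ℂ) (phi j (emb u))
          ∂((2 : ℝ≥0∞) • (volume : Measure (Fin 3 → ℝ))) =
      if k = j then 1 else 0 := by
  have hd := sub_mem_Hidx hk hj
  obtain ⟨n, hn⟩ := exists_four_mul_of_mem_Hidx hd
  have hn0 : n = 0 ↔ k = j := (eq_zero_iff_of_mem_Hidx hd hn).trans sub_eq_zero
  simp_rw [Measure.restrict_smul, integral_smul_measure, phi_mul_conj_phi,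
    phi_emb_eq_fourierExp hn]
  rw [isAddFundamentalDomain_OmegaH3.setIntegral_eq (ZSpan.isAddFundamentalDomain' _ volume)
      (fourierExp_vadd n), ZSpan.fundamentalDomain_pi_basisFun, setIntegral_fourierExp_pi_Ico]
  simp [hn0]
end

section
/- The cardinality of ℍ_n^* = {k ∈ ℤ⁴ : k₁+k₂+k₃+k₄ = 0, k₁≡k₂≡k₃≡k₄ (mod 4), and -4n ≤ k_i - k_j ≤ 4n for all 1 ≤ i < j ≤ 4} equals (n+1)⁴ - n⁴. -/
/-- The finite symmetric index set ℍ_n^*. -/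
noncomputable def HstarF (n : ℕ) : Finset (Fin 4 → ℤ) :=
  (Finset.Icc (fun _ : Fin 4 => -(3 * (n : ℤ))) (fun _ : Fin 4 => 3 * (n : ℤ))).filter
    (fun k => (∑ i, k i) = 0 ∧ (∀ i j : Fin 4, k i % 4 = k j % 4) ∧
      ∀ i j : Fin 4, -(4 * (n : ℤ)) ≤ k i - k j ∧ k i - k j ≤ 4 * (n : ℤ))

/-!
Write `d` for the number of coordinates. The map `m ↦ d • m - (∑ m) • 1` sends the lattice points
of the cube `[0, n]^d` with some coordinate `0`, i.e. `[0, n]^d ∖ [1, n]^d`, bijectively onto the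
points `k` with `∑ k = 0`, all coordinates congruent mod `d` and all differences of coordinates in
`[-d n, d n]`; the inverse subtracts the least coordinate and divides by `d`. Hence the count is
`(n + 1)^d - n^d`. The box `[-(d - 1) n, (d - 1) n]^d` in the definition of `HstarF` is implied
by the other conditions, since `d • k i = ∑ j ≠ i, (k i - k j)`.
-/

open Finset

namespace SymmetricIndexSet

variable {ι : Type*} [Fintype ι]

def IsBalanced (n : ℕ) (k : ι → ℤ) : Prop :=
  ∑ i, k i = 0 ∧ (∀ i j, k i ≡ k j [ZMOD Fintype.card ι]) ∧
    ∀ i j, k i - k j ≤ Fintype.card ι * n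

def spread (m : ι → ℤ) : ι → ℤ := fun i => Fintype.card ι * m i - ∑ j, m j

def compress [Nonempty ι] (k : ι → ℤ) : ι → ℤ :=
  fun i => (k i - univ.inf' univ_nonempty k) / Fintype.card ι

section lowerFaces

variable [DecidableEq ι]

variable (ι) in
noncomputable def lowerFaces (n : ℕ) : Finset (ι → ℤ) :=
  Icc 0 n \ Icc 1 n

theorem mem_lowerFaces {n : ℕ} {m : ι → ℤ} :
    m ∈ lowerFaces ι n ↔ (∀ i, 0 ≤ m i ∧ m i ≤ n) ∧ ∃ i, m i = 0 := by
  simp only [lowerFaces, mem_sdiff, mem_Icc, Pi.le_def, Pi.zero_apply, Pi.one_apply,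
    Pi.natCast_apply, ← forall_and, not_and, not_forall]
  refine and_congr_right fun hm => exists_congr fun i => ?_
  have := hm i
  omega

theorem card_lowerFaces (n : ℕ) :
    #(lowerFaces ι n) = (n + 1) ^ Fintype.card ι - n ^ Fintype.card ι := by
  rw [lowerFaces, card_sdiff_of_subset (Icc_subset_Icc zero_le_one le_rfl),
    Pi.card_Icc, Pi.card_Icc]
  simp [Int.card_Icc]

end lowerFaces

theorem IsBalanced.neg {n : ℕ} {k : ι → ℤ} (hk : IsBalanced n k) : IsBalanced n (-k) := by
  refine ⟨?_, fun i j => (hk.2.1 i j).neg, fun i j => ?_⟩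
  · simp [hk.1]
  · simpa [sub_eq_add_neg, add_comm] using hk.2.2 j i

theorem IsBalanced.le {n : ℕ} {k : ι → ℤ} (hk : IsBalanced n k) (i : ι) :
    k i ≤ (Fintype.card ι - 1) * n := by
  classical
  have : Nonempty ι := ⟨i⟩
  have hd : (0 : ℤ) < Fintype.card ι := by exact_mod_cast Fintype.card_pos
  have hsum : ∑ j ∈ univ.erase i, (k i - k j) = Fintype.card ι * k i := by
    rw [sum_erase _ (sub_self _), sum_sub_distrib, hk.1]
    simp
  have hcard : ((univ.erase i).card : ℤ) = Fintype.card ι - 1 := by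
    rw [card_erase_of_mem (mem_univ i), card_univ, Nat.cast_sub Fintype.card_pos]
    simp
  refine le_of_mul_le_mul_left ?_ hd
  calc Fintype.card ι * k i = ∑ j ∈ univ.erase i, (k i - k j) := hsum.symm
    _ ≤ (univ.erase i).card • (Fintype.card ι * n : ℤ) :=
      sum_le_card_nsmul _ _ _ fun j _ => hk.2.2 i j
    _ = Fintype.card ι * ((Fintype.card ι - 1) * n) := by rw [nsmul_eq_mul, hcard]; ring

theorem isBalanced_spread {n : ℕ} {m : ι → ℤ} (hm : ∀ i, 0 ≤ m i ∧ m i ≤ n) :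
    IsBalanced n (spread m) := by
  refine ⟨?_, fun i j => ?_, fun i j => ?_⟩
  · simp [spread, sum_sub_distrib, ← mul_sum]
  · exact Int.modEq_iff_dvd.mpr ⟨m j - m i, by simp only [spread]; ring⟩
  · have : spread m i - spread m j = Fintype.card ι * (m i - m j) := by simp only [spread]; ring
    rw [this]
    have := hm i; have := hm j
    gcongr
    omega

variable [Nonempty ι]

theorem spread_compress {n : ℕ} {k : ι → ℤ} (hk : IsBalanced n k) : spread (compress k) = k := by
  set μ := univ.inf' univ_nonempty k
  obtain ⟨i₀, -, hμ⟩ := exists_mem_eq_inf' univ_nonempty k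
  have hd : (Fintype.card ι : ℤ) ≠ 0 := by exact_mod_cast Fintype.card_ne_zero
  have hmul (i : ι) : Fintype.card ι * compress k i = k i - μ :=
    Int.mul_ediv_cancel' (hμ ▸ (hk.2.1 i₀ i).dvd)
  have hsum : ∑ i, compress k i = -μ := by
    apply mul_left_cancel₀ hd
    rw [mul_sum]
    simp [hmul, sum_sub_distrib, hk.1]
  funext i
  simp only [spread, hmul, hsum]
  ring

theorem compress_mem_lowerFaces [DecidableEq ι] {n : ℕ} {k : ι → ℤ} (hk : IsBalanced n k) :
    compress k ∈ lowerFaces ι n := by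
  obtain ⟨i₀, -, hμ⟩ := exists_mem_eq_inf' univ_nonempty k
  have hd : (0 : ℤ) < Fintype.card ι := by exact_mod_cast Fintype.card_pos
  refine mem_lowerFaces.mpr ⟨fun i => ⟨?_, ?_⟩, i₀, ?_⟩ <;> simp only [compress, hμ]
  · exact Int.ediv_nonneg (sub_nonneg.mpr (hμ ▸ inf'_le _ (mem_univ i))) hd.le
  · exact Int.ediv_le_of_le_mul hd (by linarith [hk.2.2 i i₀])
  · simp

theorem compress_spread [DecidableEq ι] {n : ℕ} {m : ι → ℤ} (hm : m ∈ lowerFaces ι n) :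
    compress (spread m) = m := by
  obtain ⟨hbounds, i₀, hi₀⟩ := mem_lowerFaces.mp hm
  have hinf : univ.inf' univ_nonempty (spread m) = -∑ j, m j := by
    refine le_antisymm (inf'_le_of_le _ (mem_univ i₀) (by simp [spread, hi₀]))
      (le_inf' _ _ fun i _ => ?_)
    have := (hbounds i).1
    simp only [spread]
    nlinarith [Int.natCast_nonneg (Fintype.card ι)]
  funext i
  simp only [compress, hinf, spread, sub_neg_eq_add, sub_add_cancel]
  exact Int.mul_ediv_cancel_left _ (Nat.cast_ne_zero.mpr (Fintype.card_ne_zero (α := ι)))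

end SymmetricIndexSet

open SymmetricIndexSet

theorem mem_HstarF_iff {n : ℕ} {k : Fin 4 → ℤ} : k ∈ HstarF n ↔ IsBalanced n k := by
  have hcard : (Fintype.card (Fin 4) : ℤ) = 4 := rfl
  simp only [HstarF, mem_filter, mem_Icc, Pi.le_def]
  refine ⟨fun ⟨_, hsum, hmod, hdiff⟩ => ⟨hsum, hmod, fun i j => hcard ▸ (hdiff i j).2⟩,
    fun hk => ⟨⟨fun i => ?_, fun i => ?_⟩, hk.1, hk.2.1, fun i j => ⟨?_, ?_⟩⟩⟩
  · have := hk.neg.le i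
    simp only [hcard, Pi.neg_apply] at this
    linarith
  · have := hk.le i
    simp only [hcard] at this
    linarith
  · have := hk.2.2 j i
    simp only [hcard] at this
    linarith
  · exact hcard ▸ hk.2.2 i j

theorem stmt10 (n : ℕ) : (HstarF n).card = (n + 1) ^ 4 - n ^ 4 := by
  have h := card_lowerFaces (ι := Fin 4) n
  rw [Fintype.card_fin] at h
  rw [← h]
  refine card_nbij' compress spread (fun k hk => ?_) (fun m hm => ?_) (fun k hk => ?_)
    (fun m hm => ?_)
  · exact compress_mem_lowerFaces (mem_HstarF_iff.mp hk)
  · exact mem_HstarF_iff.mpr (isBalanced_spread (mem_lowerFaces.mp hm).1)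
  · exact spread_compress (mem_HstarF_iff.mp hk)
  · exact compress_spread hm
end

section
/- For n ≥ 1, the interior index set ℍ_n^∘ = {k ∈ ℍ : -4n < k_i - k_j < 4n for all i ≠ j} has cardinality n⁴ - (n-1)⁴, where ℍ = {k ∈ ℤ⁴ : Σk_i = 0, k₁≡k₂≡k₃≡k₄ (mod 4)}. -/
/-!
Write `d` for the dimension. A point `k` with `∑ k = 0` and all coordinates congruent mod `d` is
recovered from `x := (k - min k) / d` as `k = d • x - (∑ x) • 1`. Under this correspondence the
constraints `|k i - k j| < d n` say exactly that `x` lies in the box `[0, n - 1]^d`, and `min x = 0`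
holds by construction. So the interior index set is in bijection with the box minus its translate
`[1, n - 1]^d`, which has `n^d - (n - 1)^d` points.
-/

/-- The interior index set ℍ_n^∘ = {k ∈ ℍ : -4n < k_i - k_j < 4n for i ≠ j};
the constraints force each |k_i| ≤ 3n, so it is realized as a filtered box. -/
noncomputable def HintF (n : ℕ) : Finset (Fin 4 → ℤ) :=
  (Finset.Icc (fun _ : Fin 4 => -(3 * (n : ℤ))) (fun _ : Fin 4 => 3 * (n : ℤ))).filter
    (fun k => (∑ i, k i) = 0 ∧ (∀ i j : Fin 4, k i % 4 = k j % 4) ∧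
      ∀ i j : Fin 4, i ≠ j → -(4 * (n : ℤ)) < k i - k j ∧ k i - k j < 4 * (n : ℤ))

open Finset

section

variable {ι : Type*} [Fintype ι]

/-- Allowing `i = j` adds the condition `0 < n`; without it the count fails for `n = 0` when `ι`
is a singleton. -/
def interiorIndexSet (ι : Type*) [Fintype ι] (n : ℕ) : Set (ι → ℤ) :=
  {k | ∑ i, k i = 0 ∧ (∀ i j, k i ≡ k j [ZMOD Fintype.card ι]) ∧
    ∀ i j, |k i - k j| < Fintype.card ι * n}

noncomputable def lowerFaces (ι : Type*) [Fintype ι] [DecidableEq ι] (n : ℕ) : Finset (ι → ℤ) :=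
  (Icc 0 (fun _ => (n : ℤ) - 1)).filter fun x => ∃ i, x i = 0

lemma mem_lowerFaces [DecidableEq ι] {n : ℕ} {x : ι → ℤ} :
    x ∈ lowerFaces ι n ↔ (∀ i, 0 ≤ x i ∧ x i ≤ n - 1) ∧ ∃ i, x i = 0 := by
  simp only [lowerFaces, mem_filter, mem_Icc, Pi.le_def, Pi.zero_apply, forall_and]

lemma lowerFaces_eq_sdiff [DecidableEq ι] (n : ℕ) :
    lowerFaces ι n = Icc 0 (fun _ => (n : ℤ) - 1) \ Icc 1 (fun _ => (n : ℤ) - 1) := by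
  ext x
  simp only [lowerFaces, mem_filter, mem_sdiff, mem_Icc, Pi.le_def, Pi.zero_apply, Pi.one_apply]
  refine and_congr_right fun ⟨h0, hn⟩ => ⟨fun ⟨i, hi⟩ h1 => ?_, fun h => ?_⟩
  · have := h1.1 i; omega
  · by_contra! hx
    exact h ⟨fun i => by have := h0 i; have := hx i; omega, hn⟩

lemma card_lowerFaces [DecidableEq ι] (n : ℕ) :
    #(lowerFaces ι n) = n ^ Fintype.card ι - (n - 1) ^ Fintype.card ι := by
  rw [lowerFaces_eq_sdiff, card_sdiff_of_subset (Icc_subset_Icc_left zero_le_one),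
    Pi.card_Icc, Pi.card_Icc]
  simp only [Pi.zero_apply, Pi.one_apply, Int.card_Icc, prod_const, card_univ]
  congr 2 <;> omega

lemma abs_le_of_mem_interiorIndexSet {n : ℕ} {k : ι → ℤ} (hk : k ∈ interiorIndexSet ι n)
    (i : ι) : |k i| ≤ (Fintype.card ι - 1) * n := by
  classical
  obtain ⟨hsum, -, hdiff⟩ := hk
  have hd : (0 : ℤ) < Fintype.card ι := mod_cast Fintype.card_pos_iff.2 ⟨i⟩
  have hexpand : Fintype.card ι * k i = ∑ j ∈ univ.erase i, (k i - k j) := by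
    rw [sum_erase (f := fun j => k i - k j) _ (sub_self (k i)), sum_sub_distrib, hsum,
      sum_const, card_univ, nsmul_eq_mul, sub_zero]
  have hbound : Fintype.card ι * |k i| ≤ Fintype.card ι * ((Fintype.card ι - 1) * n) :=
    calc Fintype.card ι * |k i| = |∑ j ∈ univ.erase i, (k i - k j)| := by
          rw [← hexpand, abs_mul, abs_of_pos hd]
      _ ≤ ∑ j ∈ univ.erase i, |k i - k j| := abs_sum_le_sum_abs _ _
      _ ≤ ∑ _j ∈ univ.erase i, (Fintype.card ι * n : ℤ) := sum_le_sum fun j _ => (hdiff i j).le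
      _ = Fintype.card ι * ((Fintype.card ι - 1) * n) := by
          rw [sum_const, card_erase_of_mem (mem_univ i), card_univ, nsmul_eq_mul,
            Nat.cast_pred (Fintype.card_pos_iff.2 ⟨i⟩)]
          ring
  exact le_of_mul_le_mul_left hbound hd

variable [Nonempty ι]

noncomputable def toBoxCoords (k : ι → ℤ) : ι → ℤ :=
  fun i => (k i - univ.inf' univ_nonempty k) / Fintype.card ι

def ofBoxCoords (x : ι → ℤ) : ι → ℤ :=
  fun i => Fintype.card ι * x i - ∑ j, x j

lemma card_mul_toBoxCoords {k : ι → ℤ} (hmod : ∀ i j, k i ≡ k j [ZMOD Fintype.card ι]) (i : ι) :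
    Fintype.card ι * toBoxCoords k i = k i - univ.inf' univ_nonempty k := by
  obtain ⟨j, -, hj⟩ := exists_mem_eq_inf' univ_nonempty k
  rw [toBoxCoords, hj]
  exact Int.mul_ediv_cancel' (hmod j i).dvd

lemma toBoxCoords_mem_lowerFaces [DecidableEq ι] {n : ℕ} {k : ι → ℤ}
    (hk : k ∈ interiorIndexSet ι n) : toBoxCoords k ∈ lowerFaces ι n := by
  obtain ⟨-, hmod, hdiff⟩ := hk
  have hd : (0 : ℤ) < Fintype.card ι := mod_cast Fintype.card_pos
  obtain ⟨j, -, hj⟩ := exists_mem_eq_inf' univ_nonempty k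
  have hmul := card_mul_toBoxCoords hmod
  rw [hj] at hmul
  refine mem_lowerFaces.2 ⟨fun i => ⟨?_, ?_⟩, j, ?_⟩
  · have : k j ≤ k i := hj ▸ inf'_le k (mem_univ i)
    exact (mul_nonneg_iff_of_pos_left hd).1 (by linarith [hmul i])
  · have : k i - k j < Fintype.card ι * n := (abs_lt.1 (hdiff i j)).2
    have := lt_of_mul_lt_mul_left (hmul i ▸ this) hd.le
    omega
  · simpa [hd.ne'] using hmul j

lemma ofBoxCoords_mem_interiorIndexSet {n : ℕ} {x : ι → ℤ}
    (hx : ∀ i, 0 ≤ x i ∧ x i ≤ n - 1) : ofBoxCoords x ∈ interiorIndexSet ι n := by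
  have hd : (0 : ℤ) < Fintype.card ι := mod_cast Fintype.card_pos
  have hsub (i j : ι) : ofBoxCoords x i - ofBoxCoords x j = Fintype.card ι * (x i - x j) := by
    simp only [ofBoxCoords]; ring
  refine ⟨?_, fun i j => ?_, fun i j => ?_⟩
  · simp [ofBoxCoords, sum_sub_distrib, ← mul_sum]
  · exact Int.modEq_iff_dvd.2 ⟨_, hsub j i⟩
  · rw [hsub, abs_mul, abs_of_pos hd]
    have : |x i - x j| < n := abs_lt.2 ⟨by linarith [hx i, hx j], by linarith [hx i, hx j]⟩
    exact mul_lt_mul_of_pos_left this hd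

lemma inf'_ofBoxCoords {x : ι → ℤ} (hx : ∀ i, 0 ≤ x i) (hzero : ∃ i, x i = 0) :
    univ.inf' univ_nonempty (ofBoxCoords x) = -∑ j, x j := by
  obtain ⟨i₀, hi₀⟩ := hzero
  refine le_antisymm ?_ (le_inf' _ _ fun i _ => ?_)
  · calc univ.inf' univ_nonempty (ofBoxCoords x) ≤ ofBoxCoords x i₀ := inf'_le _ (mem_univ _)
      _ = -∑ j, x j := by simp [ofBoxCoords, hi₀]
  · have : (0 : ℤ) ≤ Fintype.card ι * x i := mul_nonneg (by positivity) (hx i)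
    simp only [ofBoxCoords]; linarith

lemma toBoxCoords_ofBoxCoords {x : ι → ℤ} (hx : ∀ i, 0 ≤ x i) (hzero : ∃ i, x i = 0) :
    toBoxCoords (ofBoxCoords x) = x := by
  funext i
  simp [toBoxCoords, inf'_ofBoxCoords hx hzero, ofBoxCoords]

lemma ofBoxCoords_toBoxCoords {k : ι → ℤ} (hsum : ∑ i, k i = 0)
    (hmod : ∀ i j, k i ≡ k j [ZMOD Fintype.card ι]) : ofBoxCoords (toBoxCoords k) = k := by
  have hd : (Fintype.card ι : ℤ) ≠ 0 := mod_cast Fintype.card_ne_zero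
  have hmul := card_mul_toBoxCoords hmod
  have hsum' : ∑ j, toBoxCoords k j = -univ.inf' univ_nonempty k := by
    apply mul_left_cancel₀ hd
    simp [mul_sum, hmul, sum_sub_distrib, hsum]
  funext i
  simp only [ofBoxCoords, hmul, hsum']
  ring

theorem ncard_interiorIndexSet (n : ℕ) :
    (interiorIndexSet ι n).ncard = n ^ Fintype.card ι - (n - 1) ^ Fintype.card ι := by
  classical
  rw [← card_lowerFaces, ← Set.ncard_coe_finset]
  refine Set.BijOn.ncard_eq (f := toBoxCoords) (Set.InvOn.bijOn (f' := ofBoxCoords) ⟨?_, ?_⟩ ?_ ?_)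
  · exact fun k hk => ofBoxCoords_toBoxCoords hk.1 hk.2.1
  · intro x hx
    obtain ⟨hbox, hzero⟩ := mem_lowerFaces.1 hx
    exact toBoxCoords_ofBoxCoords (fun i => (hbox i).1) hzero
  · exact fun k hk => toBoxCoords_mem_lowerFaces hk
  · exact fun x hx => ofBoxCoords_mem_interiorIndexSet (mem_lowerFaces.1 hx).1

end

lemma coe_HintF (n : ℕ) : (HintF n : Set (Fin 4 → ℤ)) = interiorIndexSet (Fin 4) n := by
  ext k
  have hbox (hk : k ∈ interiorIndexSet (Fin 4) n) (i : Fin 4) :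
      -(3 * (n : ℤ)) ≤ k i ∧ k i ≤ 3 * n := by
    have := abs_le_of_mem_interiorIndexSet hk i
    norm_num at this
    exact abs_le.1 this
  simp only [HintF, coe_filter, mem_Icc, Pi.le_def, Set.mem_ofPred_eq]
  constructor
  · rintro ⟨-, hsum, hmod, hdiff⟩
    refine ⟨hsum, hmod, fun i j => abs_lt.2 ?_⟩
    rcases eq_or_ne i j with rfl | hij
    · have := hdiff 0 1 (by decide)
      simp only [Fintype.card_fin, Nat.cast_ofNat, sub_self]
      constructor <;> linarith
    · exact hdiff i j hij
  · intro hk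
    refine ⟨forall_and.1 (hbox hk), hk.1, hk.2.1, fun i j _ => abs_lt.1 ?_⟩
    simpa using hk.2.2 i j

theorem stmt13_general (n : ℕ) : (HintF n).card = n ^ 4 - (n - 1) ^ 4 := by
  rw [← Set.ncard_coe_finset, coe_HintF, ncard_interiorIndexSet, Fintype.card_fin]

theorem stmt13 (n : ℕ) (hn : 1 ≤ n) : (HintF n).card = n ^ 4 - (n - 1) ^ 4 :=
  stmt13_general n
end
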